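/- Let g ∈ Sp⁽²⁾(Λ₃,ℤ) be an element of finite order. Then there exists h ∈ Sp(Λ₃,ℤ) such that h⁻¹ g h is one of the four matrices 1, −1, I, −I, where 1 is the identity matrix and I = diag(1, −1, 1, −1). -/

import Mathlib

open Matrix

/-- The symplectic-type form `Λ₃` of a `(1,3)`-polarization. -/
def Lambda3 : Matrix (Fin 4) (Fin 4) ℤ :=
  !![0, 0, 1, 0; 0, 0, 0, 3; -1, 0, 0, 0; 0, -3, 0, 0]

/-- The involution `I = diag(1, -1, 1, -1)`. -/
def Imat : Matrix (Fin 4) (Fin 4) ℤ :=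
  !![1, 0, 0, 0; 0, -1, 0, 0; 0, 0, 1, 0; 0, 0, 0, -1]

namespace Sp13Classification

abbrev M4 := Matrix (Fin 4) (Fin 4) ℤ
abbrev V4 := Fin 4 → ℤ

/-! ### Entrywise divisibility lemmas -/

lemma dvd_entry_mul_left {d : ℤ} {X Y : M4} (hX : ∀ i j, d ∣ X i j) :
    ∀ i j, d ∣ (X * Y) i j := fun i j => by
  rw [Matrix.mul_apply]
  exact Finset.dvd_sum fun k _ => (hX i k).mul_right _

lemma dvd_entry_mul_right {d : ℤ} {X Y : M4} (hY : ∀ i j, d ∣ Y i j) :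
    ∀ i j, d ∣ (X * Y) i j := fun i j => by
  rw [Matrix.mul_apply]
  exact Finset.dvd_sum fun k _ => (hY k j).mul_left _

lemma dvd_entry_mul {d e : ℤ} {X Y : M4} (hX : ∀ i j, d ∣ X i j)
    (hY : ∀ i j, e ∣ Y i j) : ∀ i j, d * e ∣ (X * Y) i j := fun i j => by
  rw [Matrix.mul_apply]
  exact Finset.dvd_sum fun k _ => mul_dvd_mul (hX i k) (hY k j)

/-! ### Finite order and congruence mod 4 forces the identity -/

lemma pow_sub_one_dvd {A : M4} (h4 : ∀ i j, (4:ℤ) ∣ (A - 1) i j) :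
    ∀ n : ℕ, ∀ i j, (4:ℤ) ∣ (A ^ n - 1) i j := by
  intro n
  induction n with
  | zero => simp
  | succ n ih =>
    have key : A ^ (n+1) - 1 = A ^ n * (A - 1) + (A ^ n - 1) := by
      rw [pow_succ]; noncomm_ring
    intro i j
    rw [key, Matrix.add_apply]
    exact dvd_add (dvd_entry_mul_right h4 i j) (ih i j)

lemma core_prime {A : M4} {p : ℕ} (hp : p.Prime) (h4 : ∀ i j, (4:ℤ) ∣ (A - 1) i j)
    (hAp : A ^ p = 1) : A = 1 := by
  set B := A - 1 with hB
  have hA : A = B + 1 := by rw [hB, sub_add_cancel]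
  obtain ⟨q, hq⟩ : ∃ q, p = q + 2 := ⟨p - 2, by have := hp.two_le; omega⟩
  have hexp : (1 : M4) = ∑ m ∈ Finset.range (p + 1), p.choose m • B ^ m := by
    rw [← hAp, hA, (Commute.one_right B).add_pow]
    refine Finset.sum_congr rfl fun m _ => ?_
    rw [one_pow, mul_one, nsmul_eq_mul, (Nat.cast_commute (p.choose m) (B ^ m)).eq]
  have hpeel : ∑ m ∈ Finset.range (p + 1), p.choose m • B ^ m =
      (∑ m ∈ Finset.range (q+1), p.choose (m + 2) • B ^ (m + 2)) + p • B + 1 := by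
    subst hq
    rw [Finset.sum_range_succ' (fun m => (q+2).choose m • B ^ m) (q+2),
      Finset.sum_range_succ' (fun m => (q+2).choose (m+1) • B ^ (m+1)) (q+1)]
    simp [Nat.choose_one_right]
  have hS : (p • B : M4) = - ∑ m ∈ Finset.range (q+1), p.choose (m + 2) • B ^ (m + 2) := by
    have h := hexp.trans hpeel
    have h0 : (∑ m ∈ Finset.range (q+1), p.choose (m + 2) • B ^ (m + 2)) + p • B = 0 := by
      refine add_right_cancel (b := (1:M4)) ?_
      rw [zero_add]; exact h.symm
    rw [add_comm] at h0
    exact eq_neg_of_add_eq_zero_left h0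
  have step : ∀ k : ℕ, 2 ≤ k → (∀ i j, (2:ℤ)^k ∣ B i j) → ∀ i j, (2:ℤ)^(k+1) ∣ B i j := by
    intro k hk hdvd i j
    have hpow : ∀ m : ℕ, ∀ i j, (2:ℤ)^(k+k) ∣ (B ^ (m + 2)) i j := by
      intro m i j
      have : B ^ (m + 2) = B * B * B ^ m := by rw [add_comm, pow_add, pow_two]
      rw [this]
      have h2 : ∀ i j, (2:ℤ)^k * (2:ℤ)^k ∣ (B * B) i j := dvd_entry_mul hdvd hdvd
      rw [← pow_add] at h2
      exact dvd_entry_mul_left h2 i j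
    have hSd : (2:ℤ)^(k+k) ∣ ((p • B : M4)) i j := by
      rw [hS, Matrix.neg_apply, Matrix.sum_apply]
      refine (Finset.dvd_sum fun m _ => ?_).neg_right
      rw [Matrix.smul_apply, nsmul_eq_mul]
      exact (hpow m i j).mul_left _
    rw [Matrix.smul_apply, nsmul_eq_mul] at hSd
    rcases hp.eq_two_or_odd' with h2 | hodd
    · subst h2
      have : (2:ℤ)^(k+k) = 2 * 2^(k+k-1) := by
        rw [← pow_succ']
        congr 1
        omega
      rw [this] at hSd
      have := (mul_dvd_mul_iff_left (by norm_num : (2:ℤ) ≠ 0)).mp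
        (by simpa using hSd)
      exact dvd_trans (pow_dvd_pow 2 (by omega)) this
    · obtain ⟨t, ht⟩ := hodd
      have hcop : IsCoprime ((2:ℤ)^(k+k)) (p : ℤ) := by
        refine IsCoprime.pow_left ⟨-(t:ℤ), 1, ?_⟩
        push_cast [ht]; ring
      have := hcop.dvd_of_dvd_mul_left hSd
      exact dvd_trans (pow_dvd_pow 2 (by omega)) this
  have hall : ∀ m : ℕ, ∀ i j, (2:ℤ)^(m+2) ∣ B i j := by
    intro m
    induction m with
    | zero => intro i j; simpa using h4 i j
    | succ m ih => exact step (m + 2) (by omega) ih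
  have hB0 : B = 0 := by
    ext i j
    have hd := hall (B i j).natAbs i j
    refine Int.eq_zero_of_dvd_of_natAbs_lt_natAbs hd ?_
    have h1 : ((2:ℤ)^((B i j).natAbs + 2)).natAbs = 2^((B i j).natAbs + 2) := by
      rw [Int.natAbs_pow]; rfl
    rw [h1]
    calc (B i j).natAbs < 2 ^ (B i j).natAbs := Nat.lt_two_pow_self
    _ ≤ 2 ^ ((B i j).natAbs + 2) := Nat.pow_le_pow_right (by norm_num) (by omega)
  rw [hB] at hB0
  rwa [sub_eq_zero] at hB0

lemma eq_one_of_pow {A : M4} (h4 : ∀ i j, (4:ℤ) ∣ (A - 1) i j) :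
    ∀ n : ℕ, 0 < n → A ^ n = 1 → A = 1 := by
  intro n
  induction n using Nat.strong_induction_on with
  | _ n ih =>
    intro hn hAn
    rcases eq_or_ne n 1 with h1 | h1
    · rwa [h1, pow_one] at hAn
    · have hp : n.minFac.Prime := Nat.minFac_prime h1
      set m := n / n.minFac with hm
      have hmp : m * n.minFac = n := Nat.div_mul_cancel n.minFac_dvd
      have hAm : (A ^ m) ^ n.minFac = 1 := by rw [← pow_mul, hmp, hAn]
      have h4' := pow_sub_one_dvd h4 m
      have hA' : A ^ m = 1 := core_prime hp h4' hAm
      have hmlt : m < n := Nat.div_lt_self hn hp.two_le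
      have hmpos : 0 < m := Nat.div_pos (Nat.minFac_le hn) hp.pos
      exact ih m hmlt hmpos hA'

lemma sq_eq_one {g : M4} (hmod : ∀ i j, (2:ℤ) ∣ (g - 1) i j)
    {n : ℕ} (hn : 0 < n) (hgn : g ^ n = 1) : g * g = 1 := by
  have h4 : ∀ i j, (4:ℤ) ∣ (g * g - 1) i j := by
    have key : g * g - 1 = (g - 1) * (g + 1) := by noncomm_ring
    intro i j
    rw [key]
    have hmod' : ∀ i j, (2:ℤ) ∣ (g + 1) i j := by
      intro i j
      have : (g + 1) i j = (g - 1) i j + 2 * (1 : M4) i j := by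
        simp [Matrix.add_apply, Matrix.sub_apply]; ring
      rw [this]
      exact dvd_add (hmod i j) ⟨(1:M4) i j, rfl⟩
    have := dvd_entry_mul hmod hmod' i j
    norm_num at this
    exact this
  have hpow : (g * g) ^ n = 1 := by
    rw [← pow_two, ← pow_mul, mul_comm 2 n, pow_mul, hgn, one_pow]
  exact eq_one_of_pow h4 n hn hpow

/-! ### The symplectic form -/

def Bf (x y : V4) : ℤ := x ⬝ᵥ Lambda3 *ᵥ y

lemma transpose_lambda : Lambda3ᵀ = -Lambda3 := by decide

lemma Bf_skew (x y : V4) : Bf x y = - Bf y x := by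
  unfold Bf
  rw [dotProduct_mulVec, ← mulVec_transpose, transpose_lambda, neg_mulVec,
    neg_dotProduct, dotProduct_comm]

lemma Bf_self (x : V4) : Bf x x = 0 := by
  have := Bf_skew x x; omega

lemma Bf_smul_right (r : ℤ) (x y : V4) : Bf x (r • y) = r * Bf x y := by
  unfold Bf
  rw [mulVec_smul, dotProduct_smul, smul_eq_mul]

lemma Bf_add_right (x y z : V4) : Bf x (y + z) = Bf x y + Bf x z := by
  unfold Bf
  rw [mulVec_add, dotProduct_add]

lemma Bf_neg_right (x y : V4) : Bf x (-y) = - Bf x y := by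
  unfold Bf
  rw [mulVec_neg, dotProduct_neg]

lemma Bf_inv {g : M4} (hg : gᵀ * Lambda3 * g = Lambda3) (x y : V4) :
    Bf (g *ᵥ x) (g *ᵥ y) = Bf x y := by
  unfold Bf
  rw [show g *ᵥ x = x ᵥ* gᵀ from (vecMul_transpose g x).symm, ← dotProduct_mulVec,
    mulVec_mulVec, mulVec_mulVec, hg]

lemma conjForm_apply (A : M4) (i j : Fin 4) :
    (Aᵀ * Lambda3 * A) i j = Bf (fun k => A k i) (fun k => A k j) := by
  simp only [Bf, Matrix.mul_apply, dotProduct, mulVec, transpose_apply,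
    Finset.sum_mul, Finset.mul_sum]
  rw [Finset.sum_comm]
  exact Finset.sum_congr rfl fun k _ => Finset.sum_congr rfl fun l _ => by ring

def lamAC (a c : ℤ) : M4 := !![0,0,a,0; 0,0,0,c; -a,0,0,0; 0,-c,0,0]

lemma det_lamAC (a c : ℤ) : (lamAC a c).det = a^2 * c^2 := by
  simp [lamAC, Matrix.det_succ_row_zero, Fin.sum_univ_succ, Fin.succAbove]
  ring

lemma det_lambda : Lambda3.det = 9 := by
  simp [Lambda3, Matrix.det_succ_row_zero, Fin.sum_univ_succ, Fin.succAbove]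

/-- An integer "inverse up to 9" of `Lambda3`. -/
def N9 : M4 := !![0,0,-9,0; 0,0,0,-3; 9,0,0,0; 0,3,0,0]

lemma lambda_N9 : Lambda3 * N9 = (9:ℤ) • (1 : M4) := by decide

/-- A vector orthogonal to everything is zero. -/
lemma eq_zero_of_orth (w : V4) (h0 : ∀ y : V4, Bf w y = 0) : w = 0 := by
  have hvm : w ᵥ* Lambda3 = 0 := by
    funext j
    have h := h0 (Pi.single j 1)
    simp only [Bf, mulVec_single, mul_one] at h
    simpa [vecMul, dotProduct] using h
  have h9 : (9:ℤ) • w = 0 := by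
    calc (9:ℤ) • w = w ᵥ* ((9:ℤ) • (1:M4)) := by
          funext j
          simp [vecMul, dotProduct, Matrix.smul_apply, Matrix.one_apply, mul_ite,
            Finset.sum_ite_eq, mul_comm]
    _ = w ᵥ* (Lambda3 * N9) := by rw [lambda_N9]
    _ = (w ᵥ* Lambda3) ᵥ* N9 := by rw [vecMul_vecMul]
    _ = 0 := by rw [hvm, zero_vecMul]
  have := smul_eq_zero.mp h9
  rcases this with h | h
  · norm_num at h
  · exact h

lemma basis_fin0_eq_zero {p : Submodule ℤ V4} (b : Module.Basis (Fin 0) ℤ p) :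
    ∀ x ∈ p, x = (0:V4) := by
  intro x hx
  have h := b.sum_repr ⟨x, hx⟩
  rw [Finset.univ_eq_empty, Finset.sum_empty] at h
  have := congrArg Subtype.val h
  simpa using this.symm

lemma basis_fin1_span {p : Submodule ℤ V4} (b : Module.Basis (Fin 1) ℤ p) :
    ∀ x ∈ p, ∃ t : ℤ, x = t • (↑(b 0) : V4) := by
  intro x hx
  have h := b.sum_repr ⟨x, hx⟩
  rw [Fin.sum_univ_one] at h
  refine ⟨b.repr ⟨x, hx⟩ 0, ?_⟩
  have := congrArg Subtype.val h
  simpa using this.symm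

/-- The index shuffle used to interleave the two eigenbases. -/
def sigma4 : (Fin 2 ⊕ Fin 2) ≃ Fin 4 where
  toFun := Sum.elim ![0, 2] ![1, 3]
  invFun := ![Sum.inl 0, Sum.inr 0, Sum.inl 1, Sum.inr 1]
  left_inv := by decide
  right_inv := by decide

/-- Glue lemma: conjugating by a change of basis and a signed permutation. -/
lemma glue (g M M' T T' : M4) (a c : ℤ)
    (hMM' : M * M' = 1) (hM'M : M' * M = 1)
    (hTT' : T * T' = 1) (hT'T : T' * T = 1)
    (hform : Mᵀ * Lambda3 * M = lamAC a c)
    (hTform : Tᵀ * lamAC a c * T = Lambda3)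
    (hgM : M' * g * M = Imat)
    (hTI : T' * Imat * T = Imat ∨ T' * Imat * T = -Imat) :
    ∃ h h' : M4, hᵀ * Lambda3 * h = Lambda3 ∧ h * h' = 1 ∧ h' * h = 1 ∧
      (h' * g * h = 1 ∨ h' * g * h = -1 ∨ h' * g * h = Imat ∨ h' * g * h = -Imat) := by
  refine ⟨M * T, T' * M', ?_, ?_, ?_, ?_⟩
  · rw [transpose_mul]
    calc Tᵀ * Mᵀ * Lambda3 * (M * T) = Tᵀ * (Mᵀ * Lambda3 * M) * T := by
          simp only [Matrix.mul_assoc]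
    _ = Lambda3 := by rw [hform, hTform]
  · calc M * T * (T' * M') = M * (T * T') * M' := by simp only [Matrix.mul_assoc]
    _ = 1 := by rw [hTT', Matrix.mul_one, hMM']
  · calc T' * M' * (M * T) = T' * (M' * M) * T := by simp only [Matrix.mul_assoc]
    _ = 1 := by rw [hM'M, Matrix.mul_one, hT'T]
  · have key : T' * M' * g * (M * T) = T' * (M' * g * M) * T := by
      simp only [Matrix.mul_assoc]
    rw [key, hgM]
    rcases hTI with h | h
    · right; right; left; exact h
    · right; right; right; exact h

end Sp13Classification

open Sp13Classification in
set_option maxHeartbeats 1000000 in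
/-- Let `g ∈ Sp⁽²⁾(Λ₃,ℤ)` be an element of finite order. Then there exists
`h ∈ Sp(Λ₃,ℤ)` (with inverse `h'`) such that `h⁻¹ g h` is one of the four matrices
`1`, `-1`, `I`, `-I`, where `I = diag(1, -1, 1, -1)`. -/
theorem finite_order_elements_classification
    (g : Matrix (Fin 4) (Fin 4) ℤ)
    (hg : gᵀ * Lambda3 * g = Lambda3)
    (hmod : ∀ i j, g i j ≡ (1 : Matrix (Fin 4) (Fin 4) ℤ) i j [ZMOD 2])
    (hfin : ∃ n : ℕ, 0 < n ∧ g ^ n = 1) :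
    ∃ h h' : Matrix (Fin 4) (Fin 4) ℤ,
      hᵀ * Lambda3 * h = Lambda3 ∧ h * h' = 1 ∧ h' * h = 1 ∧
      (h' * g * h = 1 ∨ h' * g * h = -1 ∨ h' * g * h = Imat ∨ h' * g * h = -Imat) := by
  classical
  obtain ⟨n, hn, hgn⟩ := hfin
  have hmod2 : ∀ i j, (2:ℤ) ∣ (g - 1) i j := by
    intro i j
    have h2 : (2:ℤ) ∣ (1 : M4) i j - g i j := (hmod i j).dvd
    have h3 : (2:ℤ) ∣ -((1:M4) i j - g i j) := dvd_neg.mpr h2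
    simpa [Matrix.sub_apply] using h3
  have hg2 : g * g = 1 := sq_eq_one hmod2 hn hgn
  -- eigenspace submodules
  set Vp : Submodule ℤ V4 := LinearMap.ker (Matrix.mulVecLin (g - 1)) with hVpdef
  set Vm : Submodule ℤ V4 := LinearMap.ker (Matrix.mulVecLin (g + 1)) with hVmdef
  have mem_Vp : ∀ x : V4, x ∈ Vp ↔ g *ᵥ x = x := by
    intro x
    rw [hVpdef, LinearMap.mem_ker, Matrix.mulVecLin_apply, Matrix.sub_mulVec,
      Matrix.one_mulVec, sub_eq_zero]
  have mem_Vm : ∀ x : V4, x ∈ Vm ↔ g *ᵥ x = -x := by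
    intro x
    rw [hVmdef, LinearMap.mem_ker, Matrix.mulVecLin_apply, Matrix.add_mulVec,
      Matrix.one_mulVec, add_eq_zero_iff_eq_neg]
  -- decomposition
  have decomp : ∀ x : V4, ∃ y z, y ∈ Vp ∧ z ∈ Vm ∧ x = y + z := by
    intro x
    set y : V4 := fun i => (x i + (g *ᵥ x) i) / 2 with hy
    have hdvd : ∀ i, (2:ℤ) ∣ x i + (g *ᵥ x) i := by
      intro i
      have e1 : (g *ᵥ x) i - x i = ((g - 1) *ᵥ x) i := by
        simp [Matrix.sub_mulVec, Matrix.one_mulVec]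
      have h1 : (2:ℤ) ∣ ((g-1) *ᵥ x) i := by
        simp only [Matrix.mulVec, dotProduct]
        exact Finset.dvd_sum fun k _ => (hmod2 i k).mul_right _
      have h2 : (2:ℤ) ∣ (g *ᵥ x) i - x i := e1 ▸ h1
      have e2 : x i + (g *ᵥ x) i = 2 * x i + ((g *ᵥ x) i - x i) := by ring
      rw [e2]; exact dvd_add ⟨x i, rfl⟩ h2
    have h2y : (2:ℤ) • y = x + g *ᵥ x := by
      funext i
      simp only [Pi.smul_apply, smul_eq_mul, hy, Pi.add_apply]
      exact Int.mul_ediv_cancel' (hdvd i)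
    have hyp : y ∈ Vp := by
      rw [mem_Vp]
      have e2 : g *ᵥ (x + g *ᵥ x) = x + g *ᵥ x := by
        rw [mulVec_add, mulVec_mulVec, hg2, one_mulVec, add_comm]
      have e3 : (2:ℤ) • (g *ᵥ y) = (2:ℤ) • y := by
        rw [← mulVec_smul, h2y, e2]
      exact smul_right_injective V4 (by norm_num : (2:ℤ) ≠ 0) e3
    have hgx : g *ᵥ x = (2:ℤ) • y - x := by
      refine eq_sub_of_add_eq ?_
      rw [add_comm]; exact h2y.symm
    have hzm : x - y ∈ Vm := by
      rw [mem_Vm]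
      rw [mulVec_sub, (mem_Vp y).mp hyp, hgx, two_smul]
      abel
    exact ⟨y, x - y, hyp, hzm, by abel⟩
  have hcompl : IsCompl Vp Vm := by
    constructor
    · rw [Submodule.disjoint_def]
      intro x hxp hxm
      rw [mem_Vp x] at hxp
      rw [mem_Vm x] at hxm
      have hx : x = -x := hxp.symm.trans hxm
      have h2 : (2:ℤ) • x = 0 := by
        rw [two_smul]
        nth_rewrite 2 [hx]
        exact add_neg_cancel x
      rcases smul_eq_zero.mp h2 with h | h
      · norm_num at h
      · exact h
    · rw [codisjoint_iff, eq_top_iff]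
      rintro x -
      obtain ⟨y, z, hy, hz, rfl⟩ := decomp x
      exact Submodule.add_mem_sup hy hz
  -- bases of the eigenspaces
  obtain ⟨np, bp⟩ := Submodule.basisOfPid (Pi.basisFun ℤ (Fin 4)) Vp
  obtain ⟨nm, bm⟩ := Submodule.basisOfPid (Pi.basisFun ℤ (Fin 4)) Vm
  haveI := Module.Finite.of_basis bp
  haveI := Module.Free.of_basis bp
  haveI := Module.Finite.of_basis bm
  haveI := Module.Free.of_basis bm
  have hsum : np + nm = 4 := by
    have h1 := (Submodule.prodEquivOfIsCompl Vp Vm hcompl).finrank_eq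
    rw [Module.finrank_prod, Module.finrank_eq_card_basis bp,
      Module.finrank_eq_card_basis bm] at h1
    simpa [Module.finrank_fin_fun] using h1
  -- orthogonality of eigenspaces
  have horth : ∀ x ∈ Vp, ∀ y ∈ Vm, Bf x y = 0 := by
    intro x hx y hy
    have h := Bf_inv hg x y
    rw [(mem_Vp x).mp hx, (mem_Vm y).mp hy, Bf_neg_right] at h
    omega
  have horth' : ∀ y ∈ Vm, ∀ x ∈ Vp, Bf y x = 0 := by
    intro y hy x hx
    rw [Bf_skew, horth x hx y hy, neg_zero]
  have hnple : np ≤ 4 := by omega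
  interval_cases np
  -- np = 0 : g = -1
  · have hVp0 := basis_fin0_eq_zero bp
    have hneg : ∀ x : V4, g *ᵥ x = -x := by
      intro x
      obtain ⟨y, z, hy, hz, rfl⟩ := decomp x
      rw [hVp0 y hy]
      simpa using (mem_Vm z).mp hz
    have hgm1 : g = -1 := by
      ext i j
      have h1 := congrFun (hneg (Pi.single j 1)) i
      simp only [mulVec_single, mul_one] at h1
      simpa [Matrix.neg_apply, Matrix.one_apply, Pi.single_apply, eq_comm] using h1
    refine ⟨1, 1, by simp, by simp, by simp, ?_⟩
    right; left
    simp [hgm1]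
  -- np = 1 : contradiction
  · exfalso
    have hw : ∀ y : V4, Bf (↑(bp 0)) y = 0 := by
      intro y
      obtain ⟨y1, z1, hy1, hz1, rfl⟩ := decomp y
      rw [Bf_add_right]
      have h1 : Bf (↑(bp 0)) y1 = 0 := by
        obtain ⟨t, rfl⟩ := basis_fin1_span bp y1 hy1
        rw [Bf_smul_right, Bf_self, mul_zero]
      rw [h1, horth _ (SetLike.coe_mem _) _ hz1, add_zero]
    have := eq_zero_of_orth _ hw
    exact bp.ne_zero 0 (Subtype.ext (by rw [ZeroMemClass.coe_zero]; exact this))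
  -- np = 2 : the main case
  · have hnm : nm = 2 := by omega
    subst hnm
    set eqv := Submodule.prodEquivOfIsCompl Vp Vm hcompl with heqv
    set bbb := ((bp.prod bm).map eqv).reindex sigma4 with hbbb
    have he0 : bbb 0 = (↑(bp 0) : V4) := by
      rw [hbbb, Module.Basis.reindex_apply,
        show sigma4.symm 0 = Sum.inl 0 from rfl, Module.Basis.map_apply]
      simp [Module.Basis.prod_apply, heqv]
    have he1 : bbb 1 = (↑(bm 0) : V4) := by
      rw [hbbb, Module.Basis.reindex_apply,
        show sigma4.symm 1 = Sum.inr 0 from rfl, Module.Basis.map_apply]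
      simp [Module.Basis.prod_apply, heqv]
    have he2 : bbb 2 = (↑(bp 1) : V4) := by
      rw [hbbb, Module.Basis.reindex_apply,
        show sigma4.symm 2 = Sum.inl 1 from rfl, Module.Basis.map_apply]
      simp [Module.Basis.prod_apply, heqv]
    have he3 : bbb 3 = (↑(bm 1) : V4) := by
      rw [hbbb, Module.Basis.reindex_apply,
        show sigma4.symm 3 = Sum.inr 1 from rfl, Module.Basis.map_apply]
      simp [Module.Basis.prod_apply, heqv]
    set Mmat := (Pi.basisFun ℤ (Fin 4)).toMatrix ⇑bbb with hMmat
    set Mmat' := bbb.toMatrix ⇑(Pi.basisFun ℤ (Fin 4)) with hMmat'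
    have hMM' : Mmat * Mmat' = 1 := Module.Basis.toMatrix_mul_toMatrix_flip _ _
    have hM'M : Mmat' * Mmat = 1 := Module.Basis.toMatrix_mul_toMatrix_flip _ _
    have hMentry : ∀ i j, Mmat i j = bbb j i := by
      intro i j
      rw [hMmat, Module.Basis.toMatrix_apply, Pi.basisFun_repr]
    have hcol : ∀ j, (fun k => Mmat k j) = bbb j := fun j => funext fun k => hMentry k j
    -- the Gram matrix
    have hform : Mmatᵀ * Lambda3 * Mmat =
        lamAC (Bf (↑(bp 0)) (↑(bp 1))) (Bf (↑(bm 0)) (↑(bm 1))) := by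
      ext i j
      rw [conjForm_apply, hcol i, hcol j]
      have hCp0 : (↑(bp 0) : V4) ∈ Vp := SetLike.coe_mem _
      have hCp1 : (↑(bp 1) : V4) ∈ Vp := SetLike.coe_mem _
      have hCm0 : (↑(bm 0) : V4) ∈ Vm := SetLike.coe_mem _
      have hCm1 : (↑(bm 1) : V4) ∈ Vm := SetLike.coe_mem _
      fin_cases i <;> fin_cases j <;> simp [lamAC] <;> simp only [he0, he1, he2, he3]
      · exact Bf_self _
      · exact horth _ hCp0 _ hCm0
      · exact horth _ hCp0 _ hCm1
      · exact horth' _ hCm0 _ hCp0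
      · exact Bf_self _
      · exact horth' _ hCm0 _ hCp1
      · rw [Bf_skew]
      · exact horth _ hCp1 _ hCm0
      · exact Bf_self _
      · exact horth _ hCp1 _ hCm1
      · exact horth' _ hCm1 _ hCp0
      · rw [Bf_skew]
      · exact horth' _ hCm1 _ hCp1
      · exact Bf_self _
    -- eigenvector property
    have heig0 : g *ᵥ (bbb 0) = Imat 0 0 • bbb 0 := by
      rw [he0, show Imat 0 0 = 1 from rfl, one_smul]
      exact (mem_Vp _).mp (SetLike.coe_mem _)
    have heig1 : g *ᵥ (bbb 1) = Imat 1 1 • bbb 1 := by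
      rw [he1, show Imat 1 1 = -1 from rfl, neg_smul, one_smul]
      exact (mem_Vm _).mp (SetLike.coe_mem _)
    have heig2 : g *ᵥ (bbb 2) = Imat 2 2 • bbb 2 := by
      rw [he2, show Imat 2 2 = 1 from rfl, one_smul]
      exact (mem_Vp _).mp (SetLike.coe_mem _)
    have heig3 : g *ᵥ (bbb 3) = Imat 3 3 • bbb 3 := by
      rw [he3, show Imat 3 3 = -1 from rfl, neg_smul, one_smul]
      exact (mem_Vm _).mp (SetLike.coe_mem _)
    have heig : ∀ j : Fin 4, g *ᵥ (bbb j) = Imat j j • bbb j := by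
      intro j
      fin_cases j
      exacts [heig0, heig1, heig2, heig3]
    have hgM : g * Mmat = Mmat * Imat := by
      ext i j
      rw [Matrix.mul_apply, Matrix.mul_apply]
      have hL : ∑ k, g i k * Mmat k j = (g *ᵥ bbb j) i := by
        simp [Matrix.mulVec, dotProduct, hMentry]
      have hR : ∑ k, Mmat i k * Imat k j = Imat j j * bbb j i := by
        fin_cases j <;>
          simp [Imat, Fin.sum_univ_four, hMentry, Matrix.vecHead, Matrix.vecTail]
      rw [hL, hR, heig j]
      simp [Pi.smul_apply, smul_eq_mul]
    have hgM' : Mmat' * g * Mmat = Imat := by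
      rw [Matrix.mul_assoc, hgM, ← Matrix.mul_assoc, hM'M, Matrix.one_mul]
    -- determinant bookkeeping
    have hdetform := congrArg Matrix.det hform
    rw [det_mul, det_mul, det_transpose, det_lambda, det_lamAC] at hdetform
    have hdetMM : Mmat.det * Mmat'.det = 1 := by rw [← det_mul, hMM', det_one]
    have hdet1 : Mmat.det = 1 ∨ Mmat.det = -1 :=
      Int.isUnit_iff.mp (IsUnit.of_mul_eq_one _ hdetMM)
    have h9 : (Bf (↑(bp 0)) (↑(bp 1)))^2 * (Bf (↑(bm 0)) (↑(bm 1)))^2 = 9 := by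
      rcases hdet1 with h | h <;> rw [h] at hdetform <;> nlinarith [hdetform]
    obtain ⟨a, ha⟩ : ∃ a, Bf (↑(bp 0)) (↑(bp 1)) = a := ⟨_, rfl⟩
    obtain ⟨c, hc⟩ : ∃ c, Bf (↑(bm 0)) (↑(bm 1)) = c := ⟨_, rfl⟩
    rw [ha, hc] at h9 hform
    have hac : a * c = 3 ∨ a * c = -3 := by
      have h1 : (a*c - 3) * (a*c + 3) = 0 := by linear_combination h9
      rcases mul_eq_zero.mp h1 with h | h
      · left; linarith
      · right; linarith
    have hadvd : a ∣ 3 := by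
      rcases hac with h | h
      · exact ⟨c, h.symm⟩
      · exact (dvd_neg).mp ⟨c, h.symm⟩
    have hub : a ≤ 3 := Int.le_of_dvd (by norm_num) hadvd
    have hlb : -3 ≤ a := by
      have := Int.le_of_dvd (by norm_num : (0:ℤ) < 3) ((neg_dvd).mpr hadvd)
      omega
    interval_cases a
    · -- a = -3
      have hc1 : c = -1 ∨ c = 1 := by rcases hac with h | h <;> omega
      rcases hc1 with hc1 | hc1 <;> subst hc1
      · exact glue g Mmat Mmat' (!![0,1,0,0; 1,0,0,0; 0,0,0,-1; 0,0,-1,0])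
          (!![0,1,0,0; 1,0,0,0; 0,0,0,-1; 0,0,-1,0]) (-3) (-1) hMM' hM'M
          (by decide) (by decide) hform (by decide) hgM' (Or.inr (by decide))
      · exact glue g Mmat Mmat' (!![0,1,0,0; 1,0,0,0; 0,0,0,-1; 0,0,1,0])
          (!![0,1,0,0; 1,0,0,0; 0,0,0,1; 0,0,-1,0]) (-3) 1 hMM' hM'M
          (by decide) (by decide) hform (by decide) hgM' (Or.inr (by decide))
    · -- a = -2 impossible
      exfalso; rcases hac with h | h <;> omega
    · -- a = -1
      have hc1 : c = -3 ∨ c = 3 := by rcases hac with h | h <;> omega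
      rcases hc1 with hc1 | hc1 <;> subst hc1
      · exact glue g Mmat Mmat' (!![1,0,0,0; 0,1,0,0; 0,0,-1,0; 0,0,0,-1])
          (!![1,0,0,0; 0,1,0,0; 0,0,-1,0; 0,0,0,-1]) (-1) (-3) hMM' hM'M
          (by decide) (by decide) hform (by decide) hgM' (Or.inl (by decide))
      · exact glue g Mmat Mmat' (!![1,0,0,0; 0,1,0,0; 0,0,-1,0; 0,0,0,1])
          (!![1,0,0,0; 0,1,0,0; 0,0,-1,0; 0,0,0,1]) (-1) 3 hMM' hM'M
          (by decide) (by decide) hform (by decide) hgM' (Or.inl (by decide))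
    · -- a = 0 impossible
      exfalso; rcases hac with h | h <;> omega
    · -- a = 1
      have hc1 : c = -3 ∨ c = 3 := by rcases hac with h | h <;> omega
      rcases hc1 with hc1 | hc1 <;> subst hc1
      · exact glue g Mmat Mmat' (!![1,0,0,0; 0,1,0,0; 0,0,1,0; 0,0,0,-1])
          (!![1,0,0,0; 0,1,0,0; 0,0,1,0; 0,0,0,-1]) 1 (-3) hMM' hM'M
          (by decide) (by decide) hform (by decide) hgM' (Or.inl (by decide))
      · exact glue g Mmat Mmat' 1 1 1 3 hMM' hM'M
          (by decide) (by decide) hform (by decide) hgM' (Or.inl (by decide))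
    · -- a = 2 impossible
      exfalso; rcases hac with h | h <;> omega
    · -- a = 3
      have hc1 : c = -1 ∨ c = 1 := by rcases hac with h | h <;> omega
      rcases hc1 with hc1 | hc1 <;> subst hc1
      · exact glue g Mmat Mmat' (!![0,1,0,0; 1,0,0,0; 0,0,0,1; 0,0,-1,0])
          (!![0,1,0,0; 1,0,0,0; 0,0,0,-1; 0,0,1,0]) 3 (-1) hMM' hM'M
          (by decide) (by decide) hform (by decide) hgM' (Or.inr (by decide))
      · exact glue g Mmat Mmat' (!![0,1,0,0; 1,0,0,0; 0,0,0,1; 0,0,1,0])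
          (!![0,1,0,0; 1,0,0,0; 0,0,0,1; 0,0,1,0]) 3 1 hMM' hM'M
          (by decide) (by decide) hform (by decide) hgM' (Or.inr (by decide))
  -- np = 3 : contradiction
  · exfalso
    have hnm : nm = 1 := by omega
    subst hnm
    have hw : ∀ y : V4, Bf (↑(bm 0)) y = 0 := by
      intro y
      obtain ⟨y1, z1, hy1, hz1, rfl⟩ := decomp y
      rw [Bf_add_right]
      have h1 : Bf (↑(bm 0)) z1 = 0 := by
        obtain ⟨t, rfl⟩ := basis_fin1_span bm z1 hz1
        rw [Bf_smul_right, Bf_self, mul_zero]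
      rw [h1, horth' _ (SetLike.coe_mem _) _ hy1, add_zero]
    have := eq_zero_of_orth _ hw
    exact bm.ne_zero 0 (Subtype.ext (by rw [ZeroMemClass.coe_zero]; exact this))
  -- np = 4 : g = 1
  · have hnm : nm = 0 := by omega
    subst hnm
    have hVm0 := basis_fin0_eq_zero bm
    have hpos : ∀ x : V4, g *ᵥ x = x := by
      intro x
      obtain ⟨y, z, hy, hz, rfl⟩ := decomp x
      rw [hVm0 z hz]
      simpa using (mem_Vp y).mp hy
    have hg1 : g = 1 := by
      ext i j
      have h1 := congrFun (hpos (Pi.single j 1)) i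
      simp only [mulVec_single, mul_one] at h1
      simpa [Matrix.one_apply, Pi.single_apply, eq_comm] using h1
    refine ⟨1, 1, by simp, by simp, by simp, ?_⟩
    left
    simp [hg1]
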